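/- For every complex number R, all three roots of the polynomial χ(λ) = λ³ − 3·2^(−2/3)·|R|^(2/3)·λ − Im(R) are real, their sum is zero, and χ has a repeated root if and only if Re(R) = 0. -/

import Mathlib

open Polynomial

lemma key1 (R : ℂ) : ∃ r c s : ℝ, c^2 + s^2 = 1 ∧
    r^2 = (2:ℝ) ^ (-(2:ℝ)/3) * ‖R‖ ^ ((2:ℝ)/3) ∧
    2*r^3*(4*c^3 - 3*c) = R.im ∧
    2*r^3*(3*s - 4*s^3) = R.re := by
  set m := ‖R‖ with hm
  have hm0 : 0 ≤ m := norm_nonneg R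
  have hm2 : (0:ℝ) ≤ m/2 := by linarith
  set θ := (Real.pi/2 - R.arg)/3 with hθ
  refine ⟨(m/2) ^ ((1:ℝ)/3), Real.cos θ, Real.sin θ, Real.cos_sq_add_sin_sq θ, ?_, ?_, ?_⟩
  · have h1 : ((m/2) ^ ((1:ℝ)/3))^(2:ℕ) = (m/2) ^ ((2:ℝ)/3) := by
      rw [← Real.rpow_natCast ((m/2) ^ ((1:ℝ)/3)) 2, ← Real.rpow_mul hm2]
      norm_num
    rw [h1, Real.div_rpow hm0 (by norm_num), neg_div,
      Real.rpow_neg (by norm_num : (0:ℝ) ≤ 2)]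
    have h2 : (0:ℝ) < (2:ℝ) ^ ((2:ℝ)/3) := Real.rpow_pos_of_pos (by norm_num) _
    field_simp
  · have h1 : ((m/2) ^ ((1:ℝ)/3))^(3:ℕ) = m/2 := by
      rw [← Real.rpow_natCast ((m/2) ^ ((1:ℝ)/3)) 3, ← Real.rpow_mul hm2]
      norm_num
    rw [h1]
    have h2 : 4*(Real.cos θ)^3 - 3*Real.cos θ = Real.cos (3*θ) := (Real.cos_three_mul θ).symm
    have h3 : (3:ℝ)*θ = Real.pi/2 - R.arg := by rw [hθ]; ring
    rw [h2, h3, Real.cos_pi_div_two_sub]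
    have := Complex.norm_mul_sin_arg R
    rw [← hm] at this
    linarith [this]
  · have h1 : ((m/2) ^ ((1:ℝ)/3))^(3:ℕ) = m/2 := by
      rw [← Real.rpow_natCast ((m/2) ^ ((1:ℝ)/3)) 3, ← Real.rpow_mul hm2]
      norm_num
    rw [h1]
    have h2 : 3*Real.sin θ - 4*(Real.sin θ)^3 = Real.sin (3*θ) := (Real.sin_three_mul θ).symm
    have h3 : (3:ℝ)*θ = Real.pi/2 - R.arg := by rw [hθ]; ring
    rw [h2, h3, Real.sin_pi_div_two_sub]
    have := Complex.norm_mul_cos_arg R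
    rw [← hm] at this
    linarith [this]

/-- The cubic `χ_R(λ) = λ³ − 3·2^(−2/3)|R|^(2/3)·λ − Im R`, viewed over `ℂ`. -/
noncomputable def chiR (R : ℂ) : Polynomial ℂ :=
  X ^ 3 - C (((3 : ℝ) * (2 : ℝ) ^ (-(2 : ℝ) / 3) * ‖R‖ ^ ((2 : ℝ) / 3) : ℝ) : ℂ) * X
    - C ((R.im : ℝ) : ℂ)

/-- All roots of `χ_R` are real, they sum to zero, and `χ_R` has a repeated root
iff `Re R = 0`. -/
theorem stmt1 (R : ℂ) :
    (∀ z : ℂ, (chiR R).IsRoot z → z.im = 0) ∧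
    (chiR R).roots.sum = 0 ∧
    (¬ (chiR R).roots.Nodup ↔ R.re = 0) := by
  obtain ⟨r, c, s, hcs, hr2, him, hre⟩ := key1 R
  set t := Real.sqrt 3 with htdef
  have ht : t^2 = 3 := Real.sq_sqrt (by norm_num)
  have ht0 : t ≠ 0 := by positivity
  -- the three real roots
  set a0 : ℝ := 2*r*c with ha0
  set a1 : ℝ := -(r*(c + t*s)) with ha1
  set a2 : ℝ := r*(-c + t*s) with ha2
  have hsum : a0 + a1 + a2 = 0 := by rw [ha0, ha1, ha2]; ring
  have he2 : a0*a1 + a0*a2 + a1*a2 = -(3*r^2) := by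
    rw [ha0, ha1, ha2]; linear_combination (-(r^2)*s^2) * ht + (-3*r^2) * hcs
  have he3 : a0*a1*a2 = R.im := by
    rw [ha0, ha1, ha2]
    linear_combination (-2*r^3*c*s^2)*ht + (-6*r^3*c)*hcs + him
  have hprod : (a0 - a1)*(a0 - a2)*(a1 - a2) = -(3*t*R.re) := by
    rw [ha0, ha1, ha2]
    linear_combination (2*r^3*s^3*t)*ht + (-18*r^3*s*t)*hcs + (-3*t)*hre
  -- factorization over ℂ
  have hfact : chiR R = (X - C (a0:ℂ)) * (X - C (a1:ℂ)) * (X - C (a2:ℂ)) := by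
    have e1 : (a0:ℂ) + a1 + a2 = 0 := by exact_mod_cast congrArg (Complex.ofReal) hsum
    have e2 : (a0:ℂ)*a1 + a0*a2 + a1*a2
        = -(((3 : ℝ) * (2 : ℝ) ^ (-(2 : ℝ) / 3) * ‖R‖ ^ ((2 : ℝ) / 3) : ℝ) : ℂ) := by
      have : a0*a1 + a0*a2 + a1*a2
          = -((3 : ℝ) * (2 : ℝ) ^ (-(2 : ℝ) / 3) * ‖R‖ ^ ((2 : ℝ) / 3)) := by
        rw [he2, hr2]; ring
      exact_mod_cast congrArg (Complex.ofReal) this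
    have e3 : (a0:ℂ)*a1*a2 = ((R.im : ℝ) : ℂ) := by
      exact_mod_cast congrArg (Complex.ofReal) he3
    have expand : ∀ A B D : ℂ, (X - C A) * (X - C B) * (X - C D)
        = X^3 - C (A+B+D) * X^2 + C (A*B + A*D + B*D) * X - C (A*B*D) := by
      intro A B D
      simp only [map_add, map_mul]
      ring
    rw [expand, e1, e2, e3, chiR]
    simp only [map_zero, map_neg]
    ring
  -- roots
  have hne : (X - C (a0:ℂ)) * (X - C (a1:ℂ)) * (X - C (a2:ℂ)) ≠ 0 :=
    mul_ne_zero (mul_ne_zero (X_sub_C_ne_zero _) (X_sub_C_ne_zero _)) (X_sub_C_ne_zero _)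
  have hchine : chiR R ≠ 0 := by rw [hfact]; exact hne
  have hroots : (chiR R).roots = {(a0:ℂ), (a1:ℂ), (a2:ℂ)} := by
    rw [hfact, roots_mul (by rw [← hfact]; exact hchine),
      roots_mul (mul_ne_zero (X_sub_C_ne_zero _) (X_sub_C_ne_zero _)),
      roots_X_sub_C, roots_X_sub_C, roots_X_sub_C]
    rfl
  refine ⟨?_, ?_, ?_⟩
  · intro z hz
    have : z ∈ (chiR R).roots := (mem_roots hchine).2 hz
    rw [hroots] at this
    simp at this
    rcases this with h | h | h <;> rw [h] <;> exact Complex.ofReal_im _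
  · rw [hroots]
    simp
    have : a0 + (a1 + a2) = 0 := by linarith [hsum]
    exact_mod_cast congrArg (Complex.ofReal) this
  · rw [hroots]
    have hnd : Multiset.Nodup {(a0:ℂ), (a1:ℂ), (a2:ℂ)} ↔
        (a0 ≠ a1 ∧ a0 ≠ a2 ∧ a1 ≠ a2) := by
      simp [Multiset.nodup_cons, not_or]
      constructor
      · rintro ⟨⟨h1, h2⟩, h3⟩
        exact ⟨fun h => h1 (by exact_mod_cast h), fun h => h2 (by exact_mod_cast h),
          fun h => h3 (by exact_mod_cast h)⟩
      · rintro ⟨h1, h2, h3⟩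
        exact ⟨⟨fun h => h1 (by exact_mod_cast h), fun h => h2 (by exact_mod_cast h)⟩,
          fun h => h3 (by exact_mod_cast h)⟩
    rw [hnd]
    constructor
    · intro h
      by_contra hre0
      apply h
      have hp : (a0 - a1)*(a0 - a2)*(a1 - a2) ≠ 0 := by
        rw [hprod]
        simp only [neg_ne_zero]
        exact mul_ne_zero (mul_ne_zero (by norm_num) ht0) hre0
      refine ⟨?_, ?_, ?_⟩ <;> intro h' <;> apply hp <;> rw [h'] <;> ring
    · intro h hnodup
      obtain ⟨h1, h2, h3⟩ := hnodup
      have : (a0 - a1)*(a0 - a2)*(a1 - a2) ≠ 0 :=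
        mul_ne_zero (mul_ne_zero (sub_ne_zero.2 h1) (sub_ne_zero.2 h2)) (sub_ne_zero.2 h3)
      apply this
      rw [hprod, h]
      ring
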